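/- arXiv:2312.13738 — 6 statements merged into one kernel-verified Lean document; each statement's English description precedes it below -/
import Mathlib

section
/- Let g be an element of SL₂(ℂ). Then σ_s(g) = −g⁻¹ if and only if there exist a ∈ ℂ and b, c ∈ ℝ with |a|² + b·c = −1 such that g is the matrix with rows (a, b) and (c, −conj(a)). (Together with the description of the solutions of σ_s(g) = g⁻¹, this computes the 1-cocycles Z¹(Gal(ℂ/ℝ), PGL₂(ℂ)) for the Galois action induced by σ_s, where PGL₂(ℂ) = SL₂(ℂ)/{±I}.) -/
/-! For `g ∈ SL₂(ℂ)` the inverse is the adjugate, so `σ_s(g) = -g⁻¹` compares entries: it says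
`g = !![a, b; c, -conj a]` with `b, c` real, and then `det g = 1` reads `|a|² + bc = -1`. -/

open Matrix Complex

theorem map_starRingEnd_eq_neg_adjugate_fin_two_iff {R : Type*} [CommRing R] [StarRing R]
    (a b c d : R) :
    !![a, b; c, d].map (starRingEnd R) = -adjugate !![a, b; c, d] ↔
      d = -starRingEnd R a ∧ starRingEnd R b = b ∧ starRingEnd R c = c := by
  simp only [adjugate_fin_two_of, neg_of, neg_cons, neg_neg, neg_empty, ← ext_iff, map_apply,
    of_apply, cons_val', cons_val_fin_one, Fin.forall_fin_two, cons_val_zero, cons_val_one]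
  constructor
  · rintro ⟨⟨ha, hb⟩, hc, -⟩
    exact ⟨by rw [ha, neg_neg], hb, hc⟩
  · rintro ⟨rfl, hb, hc⟩
    exact ⟨⟨(neg_neg _).symm, hb⟩, hc, by rw [map_neg, starRingEnd_self_apply]⟩

theorem det_fin_two_of_neg_conj (a : ℂ) (b c : ℝ) :
    det !![a, (b : ℂ); (c : ℂ), -starRingEnd ℂ a] = -((‖a‖ ^ 2 + b * c : ℝ) : ℂ) := by
  rw [det_fin_two_of, mul_neg, mul_conj']
  push_cast
  ring

/-- For `g ∈ SL₂(ℂ)`, `σ_s(g) = −g⁻¹` if and only if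
`g = !![a, b; c, −conj a]` with `a ∈ ℂ`, `b, c ∈ ℝ`, `|a|² + b·c = −1`. -/
theorem statement3 (g : Matrix.SpecialLinearGroup (Fin 2) ℂ) :
    (↑g : Matrix (Fin 2) (Fin 2) ℂ).map (starRingEnd ℂ)
        = -(↑(g⁻¹) : Matrix (Fin 2) (Fin 2) ℂ) ↔
      ∃ (a : ℂ) (b c : ℝ), ‖a‖ ^ 2 + b * c = -1 ∧
        (↑g : Matrix (Fin 2) (Fin 2) ℂ)
          = !![a, (b : ℂ); (c : ℂ), -starRingEnd ℂ a] := by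
  have hinv : (↑(g⁻¹) : Matrix (Fin 2) (Fin 2) ℂ) = adjugate ↑g :=
    Matrix.SpecialLinearGroup.coe_inv g
  rw [hinv]
  constructor
  · obtain ⟨a, b, c, d, hg⟩ : ∃ a b c d, (g : Matrix (Fin 2) (Fin 2) ℂ) = !![a, b; c, d] :=
      ⟨_, _, _, _, eta_fin_two _⟩
    rw [hg, map_starRingEnd_eq_neg_adjugate_fin_two_iff]
    rintro ⟨rfl, hb, hc⟩
    rw [conj_eq_iff_re] at hb hc
    have hdet := g.det_coe
    rw [hg, ← hb, ← hc, det_fin_two_of_neg_conj, neg_eq_iff_eq_neg] at hdet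
    exact ⟨a, b.re, c.re, mod_cast hdet, by rw [hb, hc]⟩
  · rintro ⟨a, b, c, -, hg⟩
    rw [hg, map_starRingEnd_eq_neg_adjugate_fin_two_iff]
    exact ⟨rfl, conj_ofReal b, conj_ofReal c⟩
end

section
/- Let g be an element of SL₂(ℂ). Then σ_c(g) = −g⁻¹ if and only if there exist x, y ∈ ℝ and b ∈ ℂ with |b|² − x·y = 1 such that g is the matrix with rows (i·x, b) and (−conj(b), i·y). (Together with the description of the solutions of σ_c(g) = g⁻¹, this computes the 1-cocycles Z¹(Gal(ℂ/ℝ), PGL₂(ℂ)) for the Galois action induced by σ_c, where PGL₂(ℂ) = SL₂(ℂ)/{±I}.) -/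
open Matrix Complex

/-! Since `-g⁻¹ = (-g)⁻¹`, the condition says exactly that `g` is skew-Hermitian, `gᴴ = -g`.
A `2 × 2` skew-Hermitian matrix has purely imaginary diagonal `i x, i y` and off-diagonal entries
`b, -conj b`, and its determinant is `|b|² - x y`. -/

theorem Complex.conj_eq_neg_iff_exists_eq_I_mul {z : ℂ} :
    starRingEnd ℂ z = -z ↔ ∃ x : ℝ, z = I * x := by
  constructor
  · intro h
    have hre : z.re = 0 := by linarith [congrArg Complex.re h, conj_re z, neg_re z]
    exact ⟨z.im, Complex.ext (by simp [hre]) (by simp)⟩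
  · rintro ⟨x, rfl⟩
    simp

theorem Matrix.conjTranspose_eq_neg_iff_fin_two (A : Matrix (Fin 2) (Fin 2) ℂ) :
    Aᴴ = -A ↔ ∃ (x y : ℝ) (b : ℂ), A = !![I * x, b; -starRingEnd ℂ b, I * y] := by
  constructor
  · intro h
    have entry (i j : Fin 2) : starRingEnd ℂ (A j i) = -A i j := congr_fun (congr_fun h i) j
    obtain ⟨x, hx⟩ := conj_eq_neg_iff_exists_eq_I_mul.1 (entry 0 0)
    obtain ⟨y, hy⟩ := conj_eq_neg_iff_exists_eq_I_mul.1 (entry 1 1)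
    refine ⟨x, y, A 0 1, ?_⟩
    rw [entry 1 0, neg_neg, ← hx, ← hy]
    exact eta_fin_two A
  · rintro ⟨x, y, b, rfl⟩
    ext i j
    fin_cases i <;> fin_cases j <;> simp [mul_comm]

theorem Matrix.det_fin_two_skewHermitian (x y : ℝ) (b : ℂ) :
    (!![I * x, b; -starRingEnd ℂ b, I * y]).det = ((‖b‖ ^ 2 - x * y : ℝ) : ℂ) := by
  push_cast
  rw [det_fin_two_of, ← mul_conj']
  linear_combination (x * y : ℂ) * I_sq

theorem Matrix.SpecialLinearGroup.inv_conjTranspose_eq_neg_inv_iff {n R : Type*} [Fintype n]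
    [DecidableEq n] [CommRing R] [StarRing R] (g : SpecialLinearGroup n R) :
    ((g : Matrix n n R)ᴴ)⁻¹ = -((g⁻¹ : SpecialLinearGroup n R) : Matrix n n R) ↔
      (g : Matrix n n R)ᴴ = -g := by
  have hneg : -((g⁻¹ : SpecialLinearGroup n R) : Matrix n n R) = (-(g : Matrix n n R))⁻¹ :=
    (inv_eq_right_inv (by rw [neg_mul_neg, ← coe_mul, mul_inv_cancel, coe_one])).symm
  rw [hneg]
  refine ⟨fun h => inv_inj h ?_, fun h => by rw [h]⟩
  simp [det_conjTranspose, g.2]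

/-- For `g ∈ SL₂(ℂ)`, `σ_c(g) = (gᴴ)⁻¹ = −g⁻¹` if and only if
`g = !![i·x, b; −conj b, i·y]` with `x, y ∈ ℝ`, `b ∈ ℂ`, `|b|² − x·y = 1`. -/
theorem statement4 (g : Matrix.SpecialLinearGroup (Fin 2) ℂ) :
    ((↑g : Matrix (Fin 2) (Fin 2) ℂ)ᴴ)⁻¹ = -(↑(g⁻¹) : Matrix (Fin 2) (Fin 2) ℂ) ↔
      ∃ (x y : ℝ) (b : ℂ), ‖b‖ ^ 2 - x * y = 1 ∧
        (↑g : Matrix (Fin 2) (Fin 2) ℂ)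
          = !![Complex.I * (x : ℂ), b; -starRingEnd ℂ b, Complex.I * (y : ℂ)] := by
  rw [SpecialLinearGroup.inv_conjTranspose_eq_neg_inv_iff, conjTranspose_eq_neg_iff_fin_two]
  refine exists₃_congr fun x y b => ⟨fun hg => ⟨?_, hg⟩, And.right⟩
  have hdet := g.2
  rw [hg, det_fin_two_skewHermitian] at hdet
  exact_mod_cast hdet
end

section
/- Let k ≥ 3 be an integer and let ζ_k be a primitive k-th root of unity in ℂ. The normalizer of A_k in SL₂(ℂ) is exactly the union of the subgroup of diagonal matrices diag(a, a⁻¹) (a ∈ ℂ*) and the set of antidiagonal matrices with rows (0, b) and (−b⁻¹, 0) (b ∈ ℂ*). -/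
/-!
Conjugation by `g` maps `⟨ω⟩` onto `⟨gωg⁻¹⟩`, so `g` normalizes `⟨ω⟩` iff `gωg⁻¹` generates it.
In that case `gωg⁻¹` commutes with `ω = diag(ζ, ζ⁻¹)`, whose eigenvalues are distinct because
`k ≥ 3`, so `gωg⁻¹ = diag(u, v)` and `g diag(ζ, ζ⁻¹) = diag(u, v) g`. Entrywise this says
`g i j ≠ 0 → u_i = ζ_j`, so each row of `g` has a zero, and `det g = 1` leaves only the diagonal
and antidiagonal shapes. Conversely these conjugate `ω` to `ω` and to `ω⁻¹`.
-/

open Matrix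

theorem Subgroup.mem_normalizer_zpowers_iff {G : Type*} [Group G] {g w : G} :
    g ∈ normalizer (zpowers w : Set G) ↔ zpowers (g * w * g⁻¹) = zpowers w := by
  rw [mem_normalizer_iff_map_conj_eq, MonoidHom.map_zpowers]
  rfl

theorem IsPrimitiveRoot.ne_inv {K : Type*} [Field K] {ζ : K} {k : ℕ}
    (hζ : IsPrimitiveRoot ζ k) (hk : 3 ≤ k) : ζ ≠ ζ⁻¹ := by
  intro h
  have hsq : ζ ^ 2 = 1 := by
    rw [sq]
    nth_rw 2 [h]
    exact mul_inv_cancel₀ (hζ.ne_zero (by omega))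
  have := Nat.le_of_dvd two_pos (hζ.dvd_of_pow_eq_one 2 hsq)
  omega

namespace Matrix

variable {n R : Type*} [Fintype n] [DecidableEq n] [CommRing R] [NoZeroDivisors R]

theorem eq_of_mul_diagonal_eq_diagonal_mul {M : Matrix n n R} {d d' : n → R}
    (h : M * diagonal d = diagonal d' * M) {i j : n} (hij : M i j ≠ 0) : d' i = d j := by
  have hij' := congr_fun (congr_fun h i) j
  rw [mul_diagonal, diagonal_mul, mul_comm] at hij'
  exact (mul_right_cancel₀ hij hij').symm

theorem eq_diagonal_of_commute_diagonal {M : Matrix n n R} {d : n → R}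
    (hd : Function.Injective d) (h : Commute M (diagonal d)) : M = diagonal M.diag := by
  ext i j
  rcases eq_or_ne i j with rfl | hij
  · simp
  · rw [diagonal_apply_ne _ hij]
    by_contra hM
    exact hij (hd (eq_of_mul_diagonal_eq_diagonal_mul h.eq hM))

theorem fin_two_eq_diag_or_antidiag_of_det_eq_one {K : Type*} [Field K]
    {M : Matrix (Fin 2) (Fin 2) K} (hdet : M.det = 1) (hrow : ∀ i, M i 0 = 0 ∨ M i 1 = 0) :
    (∃ a : K, a ≠ 0 ∧ M = !![a, 0; 0, a⁻¹]) ∨ (∃ b : K, b ≠ 0 ∧ M = !![0, b; -b⁻¹, 0]) := by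
  rw [M.eta_fin_two] at hdet ⊢
  rw [det_fin_two_of] at hdet
  rcases hrow 0 with ha | hb <;> rcases hrow 1 with hc | hd
  · simp [ha, hc] at hdet
  · rw [ha, hd] at hdet ⊢
    have hb : M 0 1 ≠ 0 := by rintro hb; simp [hb] at hdet
    have hc : M 1 0 = -(M 0 1)⁻¹ := by
      field_simp
      linear_combination -hdet
    exact Or.inr ⟨M 0 1, hb, by rw [hc]⟩
  · rw [hb, hc] at hdet ⊢
    have ha : M 0 0 ≠ 0 := by rintro ha; simp [ha] at hdet
    have hd : M 1 1 = (M 0 0)⁻¹ := eq_inv_of_mul_eq_one_right (by linear_combination hdet)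
    exact Or.inl ⟨M 0 0, ha, by rw [hd]⟩
  · simp [hb, hd] at hdet

theorem SpecialLinearGroup.eq_of_conj_mem_zpowers_diagonal {ω g : SpecialLinearGroup n R}
    {d : n → R} (hd : Function.Injective d) (hω : (ω : Matrix n n R) = diagonal d)
    (hg : g * ω * g⁻¹ ∈ Subgroup.zpowers ω) {i j j' : n} (hij : g i j ≠ 0) (hij' : g i j' ≠ 0) :
    j = j' := by
  obtain ⟨m, hm⟩ := hg
  set X : Matrix n n R := ↑(g * ω * g⁻¹) with hX
  have hXdiag : X = diagonal X.diag := by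
    refine eq_diagonal_of_commute_diagonal hd ?_
    rw [← hω, hX, ← hm]
    exact ((Commute.refl ω).zpow_left m).map coeMonoidHom
  have hsemi : (g : Matrix n n R) * diagonal d = diagonal X.diag * g := by
    rw [← hω, ← hXdiag, hX, ← coe_mul, ← coe_mul, inv_mul_cancel_right]
  exact hd ((eq_of_mul_diagonal_eq_diagonal_mul hsemi hij).symm.trans
    (eq_of_mul_diagonal_eq_diagonal_mul hsemi hij'))

end Matrix

/-- For `k ≥ 3` and `ζ` a primitive `k`-th root of unity, the normalizer in
`SL₂(ℂ)` of the cyclic subgroup `A_k = ⟨ω⟩`, where `ω = diag(ζ, ζ⁻¹)`, consists exactly of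
the diagonal matrices `diag(a, a⁻¹)` (`a ∈ ℂ*`) and the antidiagonal matrices
`!![0, b; −b⁻¹, 0]` (`b ∈ ℂ*`). -/
theorem statement5 (k : ℕ) (hk : 3 ≤ k) (ζ : ℂ) (hζ : IsPrimitiveRoot ζ k)
    (ω : Matrix.SpecialLinearGroup (Fin 2) ℂ)
    (hω : (↑ω : Matrix (Fin 2) (Fin 2) ℂ) = !![ζ, 0; 0, ζ⁻¹])
    (g : Matrix.SpecialLinearGroup (Fin 2) ℂ) :
    g ∈ Subgroup.normalizer (Subgroup.zpowers ω : Set (Matrix.SpecialLinearGroup (Fin 2) ℂ)) ↔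
      (∃ a : ℂ, a ≠ 0 ∧ (↑g : Matrix (Fin 2) (Fin 2) ℂ) = !![a, 0; 0, a⁻¹]) ∨
      (∃ b : ℂ, b ≠ 0 ∧ (↑g : Matrix (Fin 2) (Fin 2) ℂ) = !![0, b; -b⁻¹, 0]) := by
  have hω' : (ω : Matrix (Fin 2) (Fin 2) ℂ) = diagonal ![ζ, ζ⁻¹] := by rw [hω, diagonal_vec2]
  rw [Subgroup.mem_normalizer_zpowers_iff]
  constructor
  · intro h
    refine fin_two_eq_diag_or_antidiag_of_det_eq_one g.2 fun i => ?_
    by_contra! hi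
    exact zero_ne_one (Matrix.SpecialLinearGroup.eq_of_conj_mem_zpowers_diagonal
      (injective_pair_iff_ne.mpr (hζ.ne_inv hk)) hω' (h ▸ Subgroup.mem_zpowers _) hi.1 hi.2)
  · rintro (⟨a, -, hg⟩ | ⟨b, -, hg⟩)
    · have hcomm : Commute g ω := Subtype.ext <| by
        rw [Matrix.SpecialLinearGroup.coe_mul, Matrix.SpecialLinearGroup.coe_mul, hg, hω',
          ← diagonal_vec2]
        exact ((Commute.all _ _).map (diagonalRingHom (Fin 2) ℂ)).eq
      rw [hcomm.mul_inv_cancel]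
    · have hinv : g * ω * g⁻¹ = ω⁻¹ := mul_inv_eq_of_eq_mul <| Subtype.ext <| by
        rw [Matrix.SpecialLinearGroup.coe_mul, Matrix.SpecialLinearGroup.coe_mul,
          Matrix.SpecialLinearGroup.coe_inv, hg, hω, adjugate_fin_two_of, mul_fin_two, mul_fin_two]
        simp [mul_comm]
      rw [hinv, Subgroup.zpowers_inv]
end

section
/- Let k ≥ 3 be an odd integer and let g be an element of the normalizer of A_k in SL₂(ℂ). Then σ_s(g)·g ∈ A_k if and only if there exists h ∈ A_k such that either g = diag(a, a⁻¹)·h for some a ∈ ℂ with |a| = 1, or g = m(x)·h for some nonzero x ∈ ℝ, where m(x) is the matrix with rows (0, i·x) and (i·x⁻¹, 0). (This computes, for k odd, the 1-cocycles Z¹(Gal(ℂ/ℝ), N/A_k) for the Galois action on N/A_k induced by σ_s, where N is the normalizer of A_k.) -/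
/-!
An element `g` normalizing `A_k = ⟨diag(ζ, ζ⁻¹)⟩` conjugates `ω` to a diagonal matrix
`diag(r, r⁻¹)`; comparing entries of `g ω = diag(r, r⁻¹) g`, and using `ζ ≠ ζ⁻¹`
(as `k ≥ 3`), `g` is diagonal or antidiagonal.

For `g = diag(a, a⁻¹)` one has `σ_s(g) g = diag(|a|², |a|⁻²)`, which lies in `A_k` only if
`|a| = 1`. For `g` antidiagonal with upper right entry `b`, `σ_s(g) g = diag(μ, μ⁻¹)` with
`μ = -b̄ / b`. As `k` is odd, the `k`-th root of unity `μ` is the square of a `k`-th root of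
unity `ν`, and then `x = -i b ν` is real and `g = m(x) diag(ν, ν⁻¹)`. Conversely,
`σ_s(m(x) h) (m(x) h) = h²` for `h ∈ A_k`.
-/

open Matrix Complex ComplexConjugate

namespace Matrix.SpecialLinearGroup

variable {K : Type*} [Field K]

def diagHom : Kˣ →* SpecialLinearGroup (Fin 2) K :=
  MonoidHom.mk' (fun u => ⟨!![(u : K), 0; 0, (u : K)⁻¹], by simp [det_fin_two]⟩) fun u v =>
    Subtype.ext <| by
      change _ = !![_, _; _, _] * !![_, _; _, _]; simp [mul_comm]

@[simp]
lemma coe_diagHom (u : Kˣ) :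
    (diagHom u : Matrix (Fin 2) (Fin 2) K) = !![(u : K), 0; 0, (u : K)⁻¹] := rfl

lemma coe_zpow_of_coe_eq_diag {ω : SpecialLinearGroup (Fin 2) K} {ζ : K} (hζ : ζ ≠ 0)
    (hω : (ω : Matrix (Fin 2) (Fin 2) K) = !![ζ, 0; 0, ζ⁻¹]) (n : ℤ) :
    ((ω ^ n : SpecialLinearGroup (Fin 2) K) : Matrix (Fin 2) (Fin 2) K) =
      !![ζ ^ n, 0; 0, (ζ ^ n)⁻¹] := by
  have : ω = diagHom (Units.mk0 ζ hζ) := Subtype.ext hω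
  simp [this, ← map_zpow]

lemma mem_zpowers_iff_of_isPrimitiveRoot {k : ℕ} [NeZero k] {ζ : K} (hζ : IsPrimitiveRoot ζ k)
    {ω : SpecialLinearGroup (Fin 2) K}
    (hω : (ω : Matrix (Fin 2) (Fin 2) K) = !![ζ, 0; 0, ζ⁻¹])
    {h : SpecialLinearGroup (Fin 2) K} :
    h ∈ Subgroup.zpowers ω ↔
      ∃ μ : K, μ ^ k = 1 ∧ (h : Matrix (Fin 2) (Fin 2) K) = !![μ, 0; 0, μ⁻¹] := by
  have hζ0 : ζ ≠ 0 := hζ.ne_zero (NeZero.ne k)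
  constructor
  · rintro ⟨n, rfl⟩
    refine ⟨ζ ^ n, ?_, coe_zpow_of_coe_eq_diag hζ0 hω n⟩
    rw [← zpow_natCast, ← _root_.zpow_mul, mul_comm, _root_.zpow_mul, hζ.zpow_eq_one,
      _root_.one_zpow]
  · rintro ⟨μ, hμ, hh⟩
    obtain ⟨i, -, rfl⟩ := hζ.eq_pow_of_pow_eq_one hμ
    refine ⟨i, Subtype.ext ?_⟩
    simpa [hh] using coe_zpow_of_coe_eq_diag hζ0 hω i

lemma eq_diag_or_eq_antidiag_of_mul_diag_eq (g : SpecialLinearGroup (Fin 2) K) {p r : K}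
    (hp₀ : p ≠ 0) (hp : p ^ 2 ≠ 1)
    (h : (g : Matrix (Fin 2) (Fin 2) K) * !![p, 0; 0, p⁻¹] = !![r, 0; 0, r⁻¹] * g) :
    (∃ a : K, a ≠ 0 ∧ (g : Matrix (Fin 2) (Fin 2) K) = !![a, 0; 0, a⁻¹]) ∨
      ∃ b : K, b ≠ 0 ∧ (g : Matrix (Fin 2) (Fin 2) K) = !![0, b; -b⁻¹, 0] := by
  have hdet := g.det_coe
  rw [eta_fin_two (g : Matrix (Fin 2) (Fin 2) K)] at h hdet ⊢
  set a := (g : Matrix (Fin 2) (Fin 2) K) 0 0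
  set b := (g : Matrix (Fin 2) (Fin 2) K) 0 1
  set c := (g : Matrix (Fin 2) (Fin 2) K) 1 0
  set d := (g : Matrix (Fin 2) (Fin 2) K) 1 1
  rw [det_fin_two_of] at hdet
  simp only [mul_fin_two, mul_zero, zero_mul, add_zero, zero_add] at h
  have e00 : a * p = r * a := congrFun₂ h 0 0
  have e01 : b * p⁻¹ = r * b := congrFun₂ h 0 1
  have e10 : c * p = r⁻¹ * c := congrFun₂ h 1 0
  have e11 : d * p⁻¹ = r⁻¹ * d := congrFun₂ h 1 1
  have hp' : p - p⁻¹ ≠ 0 := fun h0 => hp (by field_simp at h0; linear_combination h0)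
  have cancel {z : K} (hz : z * (p - p⁻¹) = 0) : z = 0 := (mul_eq_zero.1 hz).resolve_right hp'
  by_cases ha : a = 0
  · have hc : c ≠ 0 := by rintro hc; simp [ha, hc] at hdet
    have hr : r⁻¹ = p := mul_left_cancel₀ hc (by linear_combination -e10)
    have hd : d = 0 := cancel (by linear_combination -e11 - d * hr)
    have hb : b ≠ 0 := by rintro hb; simp [ha, hb] at hdet
    refine .inr ⟨b, hb, ?_⟩
    have hcb : c = -b⁻¹ := by field_simp; linear_combination -hdet + d * ha
    rw [ha, hd, hcb]
  · have hr : r = p := mul_right_cancel₀ ha (by linear_combination -e00)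
    subst hr
    have hb : b = 0 := cancel (by linear_combination -e01)
    have hc : c = 0 := cancel (by linear_combination e10)
    refine .inl ⟨a, ha, ?_⟩
    have hda : d = a⁻¹ := by field_simp; linear_combination hdet + c * hb
    rw [hb, hc, hda]

theorem eq_diag_or_eq_antidiag_of_mem_normalizer {k : ℕ} (hk : 3 ≤ k) {ζ : K}
    (hζ : IsPrimitiveRoot ζ k) {ω : SpecialLinearGroup (Fin 2) K}
    (hω : (ω : Matrix (Fin 2) (Fin 2) K) = !![ζ, 0; 0, ζ⁻¹])
    {g : SpecialLinearGroup (Fin 2) K}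
    (hg : g ∈ Subgroup.normalizer (Subgroup.zpowers ω : Set (SpecialLinearGroup (Fin 2) K))) :
    (∃ a : K, a ≠ 0 ∧ (g : Matrix (Fin 2) (Fin 2) K) = !![a, 0; 0, a⁻¹]) ∨
      ∃ b : K, b ≠ 0 ∧ (g : Matrix (Fin 2) (Fin 2) K) = !![0, b; -b⁻¹, 0] := by
  have : NeZero k := ⟨by omega⟩
  obtain ⟨r, -, hr⟩ := (mem_zpowers_iff_of_isPrimitiveRoot hζ hω).1
    ((Subgroup.mem_normalizer_iff.1 hg ω).1 (Subgroup.mem_zpowers ω))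
  refine eq_diag_or_eq_antidiag_of_mul_diag_eq g (r := r) (hζ.ne_zero (by omega))
    (hζ.pow_ne_one_of_pos_of_lt two_ne_zero (by omega)) ?_
  rw [← hω, ← hr, ← coe_mul, ← coe_mul, inv_mul_cancel_right]

end Matrix.SpecialLinearGroup

lemma Odd.exists_sq_eq_of_pow_eq_one {M : Type*} [Monoid M] {k : ℕ} (hk : Odd k) {μ : M}
    (hμ : μ ^ k = 1) : ∃ ν : M, ν ^ k = 1 ∧ ν ^ 2 = μ := by
  obtain ⟨m, rfl⟩ := hk
  refine ⟨μ ^ (m + 1), by rw [← pow_mul, mul_comm, pow_mul, hμ, one_pow], ?_⟩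
  rw [← pow_mul, show (m + 1) * 2 = 2 * m + 1 + 1 by ring, pow_succ, hμ, one_mul]

namespace Complex

lemma map_conj_diag_mul_self (a : ℂ) :
    (!![a, 0; 0, a⁻¹] : Matrix (Fin 2) (Fin 2) ℂ).map conj * !![a, 0; 0, a⁻¹] =
      !![conj a * a, 0; 0, (conj a * a)⁻¹] := by
  rw [eta_fin_two (Matrix.map _ _)]
  simp [mul_comm]

lemma map_conj_antidiag_mul_self (b : ℂ) :
    (!![0, b; -b⁻¹, 0] : Matrix (Fin 2) (Fin 2) ℂ).map conj * !![0, b; -b⁻¹, 0] =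
      !![-conj b * b⁻¹, 0; 0, (-conj b * b⁻¹)⁻¹] := by
  rw [eta_fin_two (Matrix.map _ _)]
  simp [mul_comm]

lemma antidiag_mul_diag (x ν : ℂ) :
    !![0, I * x; I * x⁻¹, 0] * !![ν, 0; 0, ν⁻¹] =
      !![0, I * x * ν⁻¹; -(I * x * ν⁻¹)⁻¹, 0] := by
  simp [mul_comm]

lemma norm_eq_one_of_map_conj_diag_mul_self_eq {k : ℕ} (hk : k ≠ 0) {a μ : ℂ}
    (hμ : μ ^ k = 1)
    (h : (!![a, 0; 0, a⁻¹] : Matrix (Fin 2) (Fin 2) ℂ).map conj * !![a, 0; 0, a⁻¹] =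
      !![μ, 0; 0, μ⁻¹]) :
    ‖a‖ = 1 := by
  rw [map_conj_diag_mul_self] at h
  have h00 : conj a * a = μ := congrFun₂ h 0 0
  have : ‖a‖ ^ 2 = 1 := by
    rw [← norm_eq_one_of_pow_eq_one hμ hk, ← h00, norm_mul, norm_conj, sq]
  exact (pow_eq_one_iff_of_nonneg (norm_nonneg a) two_ne_zero).1 this

lemma map_conj_diag_mul_diag_mul_self_eq_one {a μ : ℂ} (ha : ‖a‖ = 1) (hμ : ‖μ‖ = 1) :
    (!![a, 0; 0, a⁻¹] * !![μ, 0; 0, μ⁻¹] : Matrix (Fin 2) (Fin 2) ℂ).map conj *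
        (!![a, 0; 0, a⁻¹] * !![μ, 0; 0, μ⁻¹]) = 1 := by
  have : (!![a, 0; 0, a⁻¹] * !![μ, 0; 0, μ⁻¹] : Matrix (Fin 2) (Fin 2) ℂ) =
      !![a * μ, 0; 0, (a * μ)⁻¹] := by
    simp [mul_comm]
  rw [this, map_conj_diag_mul_self, conj_mul', norm_mul, ha, hμ]
  simp [one_fin_two]

lemma exists_antidiag_eq_of_map_conj_antidiag_mul_self_eq {k : ℕ} (hk : Odd k) {b μ : ℂ}
    (hb : b ≠ 0) (hμ : μ ^ k = 1)
    (h : (!![0, b; -b⁻¹, 0] : Matrix (Fin 2) (Fin 2) ℂ).map conj * !![0, b; -b⁻¹, 0] =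
      !![μ, 0; 0, μ⁻¹]) :
    ∃ ν : ℂ, ν ^ k = 1 ∧ ∃ x : ℝ, x ≠ 0 ∧
      !![0, b; -b⁻¹, 0] = !![0, I * x; I * (x : ℂ)⁻¹, 0] * !![ν, 0; 0, ν⁻¹] := by
  rw [map_conj_antidiag_mul_self] at h
  obtain ⟨ν, hνk, rfl⟩ := hk.exists_sq_eq_of_pow_eq_one hμ
  have hν : ‖ν‖ = 1 := norm_eq_one_of_pow_eq_one hνk hk.pos.ne'
  have hν₀ : ν ≠ 0 := norm_ne_zero_iff.1 (by rw [hν]; exact one_ne_zero)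
  have hbν : conj b = -ν ^ 2 * b := by
    have h00 : -conj b * b⁻¹ = ν ^ 2 := congrFun₂ h 0 0
    field_simp at h00
    linear_combination -h00
  obtain ⟨x, hx⟩ : ∃ x : ℝ, -I * b * ν = x := by
    refine conj_eq_iff_real.1 ?_
    rw [map_mul, map_mul, map_neg, conj_I, hbν, ← inv_eq_conj hν]
    field_simp
  refine ⟨ν, hνk, x, ?_, ?_⟩
  · rintro rfl
    simp [hb, hν₀] at hx
  · rw [antidiag_mul_diag, ← hx]
    have hb' : I * (-I * b * ν) * ν⁻¹ = b := by
      rw [show I * (-I * b * ν) * ν⁻¹ = -(I * I) * b * (ν * ν⁻¹) by ring, I_mul_I,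
        mul_inv_cancel₀ hν₀]
      ring
    rw [hb']

lemma map_conj_antidiag_mul_diag_mul_self {x : ℝ} (hx : x ≠ 0) {ν : ℂ} (hν : ‖ν‖ = 1) :
    (!![0, I * x; I * (x : ℂ)⁻¹, 0] * !![ν, 0; 0, ν⁻¹]).map conj *
        (!![0, I * x; I * (x : ℂ)⁻¹, 0] * !![ν, 0; 0, ν⁻¹]) =
      !![ν ^ 2, 0; 0, (ν ^ 2)⁻¹] := by
  have hν₀ : ν ≠ 0 := norm_ne_zero_iff.1 (by rw [hν]; exact one_ne_zero)
  have hx' : (x : ℂ) ≠ 0 := ofReal_ne_zero.2 hx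
  have : -conj (I * x * ν⁻¹) * (I * x * ν⁻¹)⁻¹ = ν ^ 2 := by
    rw [map_mul, map_mul, conj_I, conj_ofReal, map_inv₀, ← inv_eq_conj hν, inv_inv]
    field_simp
  rw [antidiag_mul_diag, map_conj_antidiag_mul_self, this]

end Complex

/-- Let `k ≥ 3` be odd, `ζ` a primitive `k`-th root of unity,
`A_k = ⟨ω⟩` with `ω = diag(ζ, ζ⁻¹)`, and let `g` lie in the normalizer of `A_k` in `SL₂(ℂ)`.
Then `σ_s(g)·g ∈ A_k` iff there is `h ∈ A_k` such that either `g = diag(a, a⁻¹)·h` with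
`|a| = 1`, or `g = !![0, i·x; i·x⁻¹, 0]·h` with `x ∈ ℝ`, `x ≠ 0`. -/
theorem statement6 (k : ℕ) (hk : 3 ≤ k) (hodd : Odd k)
    (ζ : ℂ) (hζ : IsPrimitiveRoot ζ k)
    (ω : Matrix.SpecialLinearGroup (Fin 2) ℂ)
    (hω : (↑ω : Matrix (Fin 2) (Fin 2) ℂ) = !![ζ, 0; 0, ζ⁻¹])
    (g : Matrix.SpecialLinearGroup (Fin 2) ℂ)
    (hg : g ∈ Subgroup.normalizer (Subgroup.zpowers ω : Set (Matrix.SpecialLinearGroup (Fin 2) ℂ))) :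
    Matrix.SpecialLinearGroup.map (starRingEnd ℂ) g * g ∈ Subgroup.zpowers ω ↔
      ∃ h ∈ Subgroup.zpowers ω,
        (∃ a : ℂ, ‖a‖ = 1 ∧
          (↑g : Matrix (Fin 2) (Fin 2) ℂ)
            = !![a, 0; 0, a⁻¹] * (↑h : Matrix (Fin 2) (Fin 2) ℂ)) ∨
        (∃ x : ℝ, x ≠ 0 ∧
          (↑g : Matrix (Fin 2) (Fin 2) ℂ)
            = !![0, Complex.I * (x : ℂ); Complex.I * (x : ℂ)⁻¹, 0]
                * (↑h : Matrix (Fin 2) (Fin 2) ℂ)) := by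
  have hk₀ : k ≠ 0 := by omega
  have : NeZero k := ⟨hk₀⟩
  have hA {h} := SpecialLinearGroup.mem_zpowers_iff_of_isPrimitiveRoot hζ hω (h := h)
  have hσ : ((SpecialLinearGroup.map (starRingEnd ℂ) g * g : SpecialLinearGroup (Fin 2) ℂ) :
      Matrix (Fin 2) (Fin 2) ℂ) = (g : Matrix (Fin 2) (Fin 2) ℂ).map conj * g := rfl
  rw [hA, hσ]
  constructor
  · rintro ⟨μ, hμ, hgg⟩
    rcases SpecialLinearGroup.eq_diag_or_eq_antidiag_of_mem_normalizer hk hζ hω hg with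
      ⟨a, -, hga⟩ | ⟨b, hb, hgb⟩
    · rw [hga] at hgg
      have ha := norm_eq_one_of_map_conj_diag_mul_self_eq hk₀ hμ hgg
      exact ⟨1, one_mem _, .inl ⟨a, ha, by simp [hga]⟩⟩
    · rw [hgb] at hgg
      obtain ⟨ν, hν, x, hx, hbx⟩ :=
        exists_antidiag_eq_of_map_conj_antidiag_mul_self_eq hodd hb hμ hgg
      have hν₀ : ν ≠ 0 := (IsUnit.of_pow_eq_one hν hk₀).ne_zero
      refine ⟨SpecialLinearGroup.diagHom (Units.mk0 ν hν₀), hA.2 ⟨ν, hν, by simp⟩,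
        .inr ⟨x, hx, ?_⟩⟩
      rw [hgb, hbx, SpecialLinearGroup.coe_diagHom, Units.val_mk0]
  · rintro ⟨h, hh, hg'⟩
    obtain ⟨μ, hμ, hhμ⟩ := hA.1 hh
    have hμ₁ : ‖μ‖ = 1 := norm_eq_one_of_pow_eq_one hμ hk₀
    rcases hg' with ⟨a, ha, hga⟩ | ⟨x, hx, hgx⟩
    · refine ⟨1, one_pow k, ?_⟩
      rw [hga, hhμ, map_conj_diag_mul_diag_mul_self_eq_one ha hμ₁]
      simp [one_fin_two]
    · refine ⟨μ ^ 2, by rw [← pow_mul, mul_comm, pow_mul, hμ, one_pow], ?_⟩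
      rw [hgx, hhμ, map_conj_antidiag_mul_diag_mul_self hx hμ₁]
end

section
/- Let k ≥ 4 be an even integer, let ζ_k be a primitive k-th root of unity in ℂ, and let ζ_{2k} be a primitive 2k-th root of unity with ζ_{2k}² = ζ_k. Let g be an element of the normalizer of A_k in SL₂(ℂ). Then σ_c(g)·g ∈ A_k if and only if there exists h ∈ A_k such that one of the following holds: (1) g = diag(x, x⁻¹)·h for some nonzero x ∈ ℝ; (2) g = diag(x·ζ_{2k}, x⁻¹·ζ_{2k}⁻¹)·h for some nonzero x ∈ ℝ; (3) g = m(b)·h for some b ∈ ℂ with |b| = 1, where m(b) has rows (0, b) and (−b⁻¹, 0). (This computes, for k even, the 1-cocycles Z¹(Gal(ℂ/ℝ), N/A_k) for the Galois action induced by σ_c, where N is the normalizer of A_k.) -/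
open Matrix Complex

/-!
Since `ω` has distinct eigenvalues `ζ ≠ ζ⁻¹` and `g ω g⁻¹` is again diagonal, `g` is either
diagonal `diag(a, a⁻¹)` or antidiagonal `m(b)`. For `h = diag(u, u⁻¹) ∈ A_k` the condition
`σ_c(g) g = h` reads `gᴴ h = g`.

In the diagonal case this is `conj a * u = a`. Writing `u = ζ^j = (ζ₂^j)²` with `|ζ₂^j| = 1`, it
says exactly that `a / ζ₂^j` is real, and the parity of `j` separates the families (1) and (2).
In the antidiagonal case it is `-(conj b)⁻¹ u⁻¹ = b`, which forces `|b| = 1`; conversely, for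
`|b| = 1` one has `σ_c(m(b)) m(b) = -1 = ω^(k/2)`, which lies in `A_k` because `k` is even.
-/

namespace Matrix

variable {K : Type*} [Field K]

def diagMat (a : K) : Matrix (Fin 2) (Fin 2) K := !![a, 0; 0, a⁻¹]

def antidiagMat (b : K) : Matrix (Fin 2) (Fin 2) K := !![0, b; -b⁻¹, 0]

@[simp]
theorem diagMat_mul_diagMat (a b : K) : diagMat a * diagMat b = diagMat (a * b) := by
  simp [diagMat, mul_comm]

@[simp]
theorem antidiagMat_mul_diagMat (b u : K) :
    antidiagMat b * diagMat u = antidiagMat (b * u⁻¹) := by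
  simp [diagMat, antidiagMat, mul_comm]

theorem adjugate_diagMat (a : K) : adjugate (diagMat a) = diagMat a⁻¹ := by
  simp [diagMat, adjugate_fin_two]

@[simp]
theorem diagMat_inj {a b : K} : diagMat a = diagMat b ↔ a = b :=
  ⟨fun h => by simpa [diagMat] using congrFun (congrFun h 0) 0, congrArg _⟩

@[simp]
theorem antidiagMat_inj {a b : K} : antidiagMat a = antidiagMat b ↔ a = b :=
  ⟨fun h => by simpa [antidiagMat] using congrFun (congrFun h 0) 1, congrArg _⟩

@[simp]
theorem diagMat_eq_antidiagMat_iff {a b : K} : diagMat a = antidiagMat b ↔ a = 0 ∧ b = 0 := by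
  simp [diagMat, antidiagMat, eq_comm, and_comm]

@[simp]
theorem antidiagMat_eq_diagMat_iff {a b : K} : antidiagMat b = diagMat a ↔ a = 0 ∧ b = 0 := by
  rw [eq_comm, diagMat_eq_antidiagMat_iff]

theorem eq_diagMat_or_eq_antidiagMat_of_mul_diagMat_eq {G : Matrix (Fin 2) (Fin 2) K}
    (hG : G.det = 1) {ζ μ : K} (hζ : ζ⁻¹ ≠ ζ) (h : G * diagMat ζ = diagMat μ * G) :
    (∃ a, a ≠ 0 ∧ G = diagMat a) ∨ ∃ b, b ≠ 0 ∧ G = antidiagMat b := by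
  rw [eta_fin_two G] at h hG ⊢
  rw [det_fin_two_of] at hG
  set a := G 0 0
  set b := G 0 1
  set c := G 1 0
  set d := G 1 1
  have e00 : a * ζ = μ * a := by simpa [diagMat] using congrFun (congrFun h 0) 0
  have e01 : b * ζ⁻¹ = μ * b := by simpa [diagMat] using congrFun (congrFun h 0) 1
  have e10 : c * ζ = μ⁻¹ * c := by simpa [diagMat] using congrFun (congrFun h 1) 0
  have e11 : d * ζ⁻¹ = μ⁻¹ * d := by simpa [diagMat] using congrFun (congrFun h 1) 1
  by_cases ha : a = 0
  · have hb : b ≠ 0 := by rintro hb; simp [ha, hb] at hG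
    have hμ : μ = ζ⁻¹ := mul_right_cancel₀ hb (by rw [← e01, mul_comm])
    have hd : d = 0 := by
      by_contra hd
      exact hζ (mul_left_cancel₀ hd (by rw [e11, hμ, inv_inv, mul_comm]))
    have hc : c = -b⁻¹ := by
      rw [ha, hd] at hG
      field_simp
      linear_combination -hG
    exact Or.inr ⟨b, hb, by simp [antidiagMat, ha, hd, hc]⟩
  · have hμ : μ = ζ := mul_right_cancel₀ ha (by rw [← e00, mul_comm])
    have hb : b = 0 := by
      by_contra hb
      exact hζ (mul_left_cancel₀ hb (by rw [e01, hμ, mul_comm]))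
    have hc : c = 0 := by
      by_contra hc
      exact hζ (mul_left_cancel₀ hc (by rw [e10, hμ, mul_comm])).symm
    have hd : d = a⁻¹ := by
      rw [hb] at hG
      field_simp
      linear_combination hG
    exact Or.inl ⟨a, ha, by simp [diagMat, hb, hc, hd]⟩

variable [StarRing K]

@[simp]
theorem conjTranspose_diagMat (a : K) : (diagMat a)ᴴ = diagMat (star a) := by
  ext i j; fin_cases i <;> fin_cases j <;> simp [diagMat, star_inv₀]

@[simp]
theorem conjTranspose_antidiagMat (b : K) : (antidiagMat b)ᴴ = antidiagMat (-(star b)⁻¹) := by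
  ext i j; fin_cases i <;> fin_cases j <;> simp [antidiagMat, star_inv₀]

theorem conjTranspose_inv_mul_eq_iff {n : Type*} [Fintype n] [DecidableEq n]
    {A : Matrix n n K} (hA : IsUnit A.det) (B : Matrix n n K) :
    (Aᴴ)⁻¹ * A = B ↔ Aᴴ * B = A := by
  let := invertibleOfIsUnitDet A hA
  rw [inv_mul_eq_iff_eq_mul_of_invertible, eq_comm]

end Matrix

theorem Matrix.SpecialLinearGroup.coe_zpow_of_coe_eq_diagMat {K : Type*} [Field K]
    {ω : SpecialLinearGroup (Fin 2) K} {ζ : K}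
    (hω : (ω : Matrix (Fin 2) (Fin 2) K) = diagMat ζ) (j : ℤ) :
    ((ω ^ j : SpecialLinearGroup (Fin 2) K) : Matrix (Fin 2) (Fin 2) K) = diagMat (ζ ^ j) := by
  have hζ0 : ζ ≠ 0 := by
    rintro rfl
    simpa [hω, diagMat] using ω.2
  induction j using Int.induction_on with
  | zero => simp [diagMat, one_fin_two]
  | succ n ih => rw [_root_.zpow_add_one, coe_mul, ih, hω, diagMat_mul_diagMat, zpow_add_one₀ hζ0]
  | pred n ih =>
    rw [_root_.zpow_sub_one, coe_mul, ih, coe_inv, hω, adjugate_diagMat, diagMat_mul_diagMat,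
      zpow_sub_one₀ hζ0]

theorem IsPrimitiveRoot.inv_ne_self {G₀ : Type*} [CommGroupWithZero G₀] {ζ : G₀} {k : ℕ}
    (hζ : IsPrimitiveRoot ζ k) (hk : 2 < k) : ζ⁻¹ ≠ ζ := fun h =>
  hζ.pow_ne_one_of_pos_of_lt two_ne_zero hk <| by
    rw [sq]; nth_rw 1 [← h]; exact inv_mul_cancel₀ (hζ.ne_zero (by omega))

theorem IsPrimitiveRoot.pow_div_two_eq_neg_one {R : Type*} [CommRing R] [NoZeroDivisors R]
    {ζ : R} {k : ℕ} (hζ : IsPrimitiveRoot ζ k) (hev : Even k) (hk : k ≠ 0) :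
    ζ ^ (k / 2) = -1 := by
  obtain ⟨m, rfl⟩ := hev
  have hm : (m + m) / m = 2 := Nat.div_eq_of_eq_mul_left (by omega) (by omega)
  have hprim : IsPrimitiveRoot (ζ ^ m) 2 := hm ▸ hζ.pow_of_dvd (by omega) ⟨2, by omega⟩
  rw [show (m + m) / 2 = m by omega, hprim.eq_neg_one_of_two_right]

theorem exists_zpow_iff_of_sq_eq {G₀ : Type*} [CommGroupWithZero G₀] {ζ ζ₂ : G₀}
    (hsq : ζ₂ ^ 2 = ζ) (hζ₂ : ζ₂ ≠ 0) {P : G₀ → Prop} :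
    (∃ j : ℤ, P (ζ₂ ^ j)) ↔ ∃ m : ℤ, P (ζ ^ m) ∨ P (ζ₂ * ζ ^ m) := by
  have heven (m : ℤ) : ζ₂ ^ (2 * m) = ζ ^ m := by rw [_root_.zpow_mul, zpow_ofNat, hsq]
  constructor
  · rintro ⟨j, hj⟩
    obtain ⟨m, rfl | rfl⟩ := Int.even_or_odd' j
    · exact ⟨m, Or.inl (by rwa [← heven])⟩
    · exact ⟨m, Or.inr (by rwa [zpow_add_one₀ hζ₂, heven, mul_comm] at hj)⟩
  · rintro ⟨m, hm | hm⟩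
    · exact ⟨2 * m, by rwa [heven]⟩
    · exact ⟨2 * m + 1, by rwa [zpow_add_one₀ hζ₂, heven, mul_comm]⟩

namespace Complex

open ComplexConjugate

theorem conj_mul_sq_eq_self_iff {a w : ℂ} (hw : ‖w‖ = 1) :
    conj a * w ^ 2 = a ↔ ∃ x : ℝ, a = x * w := by
  have hw0 : w ≠ 0 := norm_ne_zero_iff.mp (by rw [hw]; exact one_ne_zero)
  have hconj : conj w = w⁻¹ := (inv_eq_conj hw).symm
  constructor
  · intro h
    obtain ⟨x, hx⟩ := conj_eq_iff_real.mp (show conj (a * w⁻¹) = a * w⁻¹ by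
      rw [map_mul, map_inv₀, hconj, inv_inv]
      exact (eq_mul_inv_iff_mul_eq₀ hw0).mpr (by rw [mul_assoc, ← sq, h]))
    exact ⟨x, by rw [← hx]; field_simp⟩
  · rintro ⟨x, rfl⟩
    rw [map_mul, conj_ofReal, hconj]
    field_simp

theorem exists_conj_mul_zpow_eq_self_iff {ζ ζ₂ a : ℂ} (hsq : ζ₂ ^ 2 = ζ) (hζ₂ : ‖ζ₂‖ = 1)
    (ha : a ≠ 0) :
    (∃ m : ℤ, conj a * ζ ^ m = a) ↔
      ∃ m : ℤ, (∃ x : ℝ, x ≠ 0 ∧ a = x * ζ ^ m) ∨ ∃ x : ℝ, x ≠ 0 ∧ a = x * ζ₂ * ζ ^ m := by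
  have hζ₂0 : ζ₂ ≠ 0 := norm_ne_zero_iff.mp (by rw [hζ₂]; exact one_ne_zero)
  calc (∃ m : ℤ, conj a * ζ ^ m = a)
      ↔ ∃ j : ℤ, ∃ x : ℝ, x ≠ 0 ∧ a = x * ζ₂ ^ j := exists_congr fun j => by
        have hsqj : ζ ^ j = (ζ₂ ^ j) ^ 2 := by
          rw [← hsq, ← zpow_natCast, ← zpow_natCast, ← _root_.zpow_mul, ← _root_.zpow_mul, mul_comm]
        rw [hsqj, conj_mul_sq_eq_self_iff (by rw [norm_zpow, hζ₂, _root_.one_zpow])]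
        refine exists_congr fun x => (and_iff_right_of_imp ?_).symm
        rintro hx rfl
        exact ha (by simpa using hx)
    _ ↔ _ := by
        simpa only [mul_assoc] using
          exists_zpow_iff_of_sq_eq hsq hζ₂0 (P := fun w => ∃ x : ℝ, x ≠ 0 ∧ a = x * w)

theorem exists_neg_inv_conj_mul_zpow_eq_iff {ζ b : ℂ} (hζ : ‖ζ‖ = 1)
    (hneg : ∃ m : ℤ, ζ ^ m = -1) (hb : b ≠ 0) :
    (∃ m : ℤ, -((conj b)⁻¹ * (ζ ^ m)⁻¹) = b) ↔
      ∃ m : ℤ, ∃ c : ℂ, ‖c‖ = 1 ∧ b = c * (ζ ^ m)⁻¹ := by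
  have hpow (m : ℤ) : ‖(ζ ^ m)⁻¹‖ = 1 := by
    rw [norm_inv, norm_zpow, hζ, _root_.one_zpow, inv_one]
  trans ‖b‖ = 1
  · constructor
    · rintro ⟨m, hm⟩
      have hnorm : ‖b‖⁻¹ = ‖b‖ := by
        simpa only [norm_neg, norm_mul, norm_inv, norm_conj, hpow, mul_one] using congrArg norm hm
      have hpos : 0 < ‖b‖ := norm_pos_iff.mpr hb
      nlinarith [inv_mul_cancel₀ hpos.ne']
    · intro h
      obtain ⟨m, hm⟩ := hneg
      exact ⟨m, by rw [hm, ← inv_eq_conj h, inv_inv]; ring⟩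
  · constructor
    · intro h
      exact ⟨0, b, h, by simp⟩
    · rintro ⟨m, c, hc, rfl⟩
      rw [norm_mul, hc, hpow, one_mul]

end Complex

theorem statement9_general (k : ℕ) (hk : 4 ≤ k) (hev : Even k)
    (ζ ζ₂ : ℂ) (hζ : IsPrimitiveRoot ζ k)
    (hsq : ζ₂ ^ 2 = ζ)
    (ω : Matrix.SpecialLinearGroup (Fin 2) ℂ)
    (hω : (↑ω : Matrix (Fin 2) (Fin 2) ℂ) = !![ζ, 0; 0, ζ⁻¹])
    (g : Matrix.SpecialLinearGroup (Fin 2) ℂ)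
    (hg : g ∈ Subgroup.normalizer (Subgroup.zpowers ω : Set (Matrix.SpecialLinearGroup (Fin 2) ℂ))) :
    (∃ h ∈ Subgroup.zpowers ω,
        ((↑g : Matrix (Fin 2) (Fin 2) ℂ)ᴴ)⁻¹ * (↑g : Matrix (Fin 2) (Fin 2) ℂ)
          = (↑h : Matrix (Fin 2) (Fin 2) ℂ)) ↔
      ∃ h ∈ Subgroup.zpowers ω,
        (∃ x : ℝ, x ≠ 0 ∧
          (↑g : Matrix (Fin 2) (Fin 2) ℂ)
            = !![(x : ℂ), 0; 0, (x : ℂ)⁻¹] * (↑h : Matrix (Fin 2) (Fin 2) ℂ)) ∨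
        (∃ x : ℝ, x ≠ 0 ∧
          (↑g : Matrix (Fin 2) (Fin 2) ℂ)
            = !![(x : ℂ) * ζ₂, 0; 0, (x : ℂ)⁻¹ * ζ₂⁻¹]
                * (↑h : Matrix (Fin 2) (Fin 2) ℂ)) ∨
        (∃ b : ℂ, ‖b‖ = 1 ∧
          (↑g : Matrix (Fin 2) (Fin 2) ℂ)
            = !![0, b; -b⁻¹, 0] * (↑h : Matrix (Fin 2) (Fin 2) ℂ)) := by
  have hnormζ : ‖ζ‖ = 1 := hζ.norm'_eq_one (by omega)
  have hnormζ₂ : ‖ζ₂‖ = 1 := by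
    rw [← pow_left_inj₀ (norm_nonneg _) zero_le_one two_ne_zero, ← norm_pow, hsq, hnormζ, one_pow]
  have hneg : ∃ m : ℤ, ζ ^ m = -1 :=
    ⟨(k / 2 : ℕ), by rw [zpow_natCast, hζ.pow_div_two_eq_neg_one hev (by omega)]⟩
  rw [← diagMat.eq_1] at hω
  obtain ⟨n, hn⟩ := Subgroup.mem_zpowers_iff.mp
    ((Subgroup.mem_normalizer_iff.mp hg ω).mp (Subgroup.mem_zpowers ω))
  have hcomm : (g : Matrix (Fin 2) (Fin 2) ℂ) * diagMat ζ = diagMat (ζ ^ n) * g := by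
    rw [← hω, ← SpecialLinearGroup.coe_zpow_of_coe_eq_diagMat hω, hn,
      ← Matrix.SpecialLinearGroup.coe_mul, ← Matrix.SpecialLinearGroup.coe_mul]
    group
  simp only [← mul_inv, ← diagMat.eq_1, ← antidiagMat.eq_1, Subgroup.exists_mem_zpowers,
    SpecialLinearGroup.coe_zpow_of_coe_eq_diagMat hω,
    conjTranspose_inv_mul_eq_iff (g.2.symm ▸ isUnit_one)]
  rcases eq_diagMat_or_eq_antidiagMat_of_mul_diagMat_eq g.2 (hζ.inv_ne_self (by omega)) hcomm with
    ⟨a, ha, hG⟩ | ⟨b, hb, hG⟩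
  · simpa [hG, ha] using exists_conj_mul_zpow_eq_self_iff hsq hnormζ₂ ha
  · simpa [hG, hb] using exists_neg_inv_conj_mul_zpow_eq_iff hnormζ hneg hb

/-- Let `k ≥ 4` be even, `ζ` a primitive `k`-th root of unity, `ζ₂` a primitive
`2k`-th root of unity with `ζ₂² = ζ`, `A_k = ⟨ω⟩` with `ω = diag(ζ, ζ⁻¹)`, and let `g` lie in
the normalizer of `A_k` in `SL₂(ℂ)`. Then `σ_c(g)·g ∈ A_k` iff there is `h ∈ A_k` with
(1) `g = diag(x, x⁻¹)·h`, `x ∈ ℝ*`; or (2) `g = diag(x·ζ₂, x⁻¹·ζ₂⁻¹)·h`, `x ∈ ℝ*`; or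
(3) `g = !![0, b; −b⁻¹, 0]·h`, `b ∈ ℂ`, `|b| = 1`. -/
theorem statement9 (k : ℕ) (hk : 4 ≤ k) (hev : Even k)
    (ζ ζ₂ : ℂ) (hζ : IsPrimitiveRoot ζ k) (hζ₂ : IsPrimitiveRoot ζ₂ (2 * k))
    (hsq : ζ₂ ^ 2 = ζ)
    (ω : Matrix.SpecialLinearGroup (Fin 2) ℂ)
    (hω : (↑ω : Matrix (Fin 2) (Fin 2) ℂ) = !![ζ, 0; 0, ζ⁻¹])
    (g : Matrix.SpecialLinearGroup (Fin 2) ℂ)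
    (hg : g ∈ Subgroup.normalizer (Subgroup.zpowers ω : Set (Matrix.SpecialLinearGroup (Fin 2) ℂ))) :
    (∃ h ∈ Subgroup.zpowers ω,
        ((↑g : Matrix (Fin 2) (Fin 2) ℂ)ᴴ)⁻¹ * (↑g : Matrix (Fin 2) (Fin 2) ℂ)
          = (↑h : Matrix (Fin 2) (Fin 2) ℂ)) ↔
      ∃ h ∈ Subgroup.zpowers ω,
        (∃ x : ℝ, x ≠ 0 ∧
          (↑g : Matrix (Fin 2) (Fin 2) ℂ)
            = !![(x : ℂ), 0; 0, (x : ℂ)⁻¹] * (↑h : Matrix (Fin 2) (Fin 2) ℂ)) ∨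
        (∃ x : ℝ, x ≠ 0 ∧
          (↑g : Matrix (Fin 2) (Fin 2) ℂ)
            = !![(x : ℂ) * ζ₂, 0; 0, (x : ℂ)⁻¹ * ζ₂⁻¹]
                * (↑h : Matrix (Fin 2) (Fin 2) ℂ)) ∨
        (∃ b : ℂ, ‖b‖ = 1 ∧
          (↑g : Matrix (Fin 2) (Fin 2) ℂ)
            = !![0, b; -b⁻¹, 0] * (↑h : Matrix (Fin 2) (Fin 2) ℂ)) :=
  statement9_general k hk hev ζ ζ₂ hζ hsq ω hω g hg
end

section
/- Let k ≥ 1 be an integer and let H be a cyclic subgroup of SL₂(ℂ) of order k. Then H is conjugate in SL₂(ℂ) to the subgroup A_k generated by ω_k = diag(ζ_k, ζ_k⁻¹), where ζ_k is a primitive k-th root of unity in ℂ; that is, there exists g ∈ SL₂(ℂ) with g·H·g⁻¹ = A_k. -/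
/-!
A generator `h` of `H` has an eigenvector, so it is conjugate in `SL₂` to an upper triangular
matrix `[[λ, x], [0, λ⁻¹]]`. If `λ ≠ λ⁻¹`, a unipotent conjugation clears `x`; if `λ = λ⁻¹`, the
`(0, 1)` entry of the `k`-th power is `k λ^(k-1) x`, so `h ^ k = 1` forces `x = 0`. Hence `H` is
conjugate to the image of `⟨λ⟩` under `λ ↦ diag(λ, λ⁻¹)`, and `λ` has order `k`, so both `⟨λ⟩`
and `⟨ζ⟩` are the group of `k`-th roots of unity.
-/

open Matrix Polynomial

open scoped MatrixGroups

lemma SemiconjBy.isConj {G : Type*} [Group G] {c a b : G} (h : SemiconjBy c a b) : IsConj a b :=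
  isConj_iff.mpr ⟨c, mul_inv_eq_of_eq_mul h⟩

namespace Matrix.SpecialLinearGroup

section CommRing

variable {R : Type*} [CommRing R]

def upperTriangular (u : Rˣ) (x : R) : SL(2, R) :=
  ⟨!![(u : R), x; 0, ((u⁻¹ : Rˣ) : R)], by simp [det_fin_two_of]⟩

@[simp]
lemma coe_upperTriangular (u : Rˣ) (x : R) :
    (upperTriangular u x : Matrix (Fin 2) (Fin 2) R) = !![(u : R), x; 0, ((u⁻¹ : Rˣ) : R)] :=
  rfl

def diagonalHom : Rˣ →* SL(2, R) where
  toFun u := upperTriangular u 0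
  map_one' := by ext i j; fin_cases i <;> fin_cases j <;> simp
  map_mul' u v := by
    ext i j; fin_cases i <;> fin_cases j <;> simp [mul_comm]

@[simp]
lemma diagonalHom_apply (u : Rˣ) : diagonalHom u = upperTriangular u 0 := rfl

lemma diagonalHom_injective : Function.Injective (diagonalHom : Rˣ →* SL(2, R)) := fun u v huv ↦
  Units.ext <| by simpa using congrArg (fun g : SL(2, R) ↦ g 0 0) huv

lemma fin_two_upper_pow_succ (l x : R) (n : ℕ) :
    !![l, x; 0, l] ^ (n + 1) = !![l ^ (n + 1), (n + 1) * l ^ n * x; 0, l ^ (n + 1)] := by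
  induction n with
  | zero => simp
  | succ n ih =>
    rw [pow_succ, ih, mul_fin_two]
    push_cast
    ring_nf

lemma eq_zero_of_upperTriangular_pow_eq_one [IsDomain R] [CharZero R] {u : Rˣ} {x : R} {k : ℕ}
    (hu : u⁻¹ = u) (hk : k ≠ 0) (hpow : upperTriangular u x ^ k = 1) : x = 0 := by
  obtain ⟨n, rfl⟩ := Nat.exists_eq_succ_of_ne_zero hk
  have h01 := congrArg (fun g : SL(2, R) ↦ (g : Matrix (Fin 2) (Fin 2) R) 0 1) hpow
  simpa [hu, fin_two_upper_pow_succ, Nat.cast_add_one_ne_zero] using h01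

end CommRing

variable {K : Type*} [Field K]

lemma isConj_upperTriangular_diagonalHom_of_inv_ne {u : Kˣ} (hu : u⁻¹ ≠ u) (x : K) :
    IsConj (upperTriangular u x) (diagonalHom u) := by
  have hne : (u : K) ^ 2 - 1 ≠ 0 := by
    rwa [sub_ne_zero, ← Units.val_pow_eq_pow_val, ← Units.val_one, Ne, Units.val_inj, sq,
      ← inv_eq_iff_mul_eq_one]
  refine SemiconjBy.isConj (c := upperTriangular 1 (x * u / (u ^ 2 - 1))) ?_
  ext i j : 2
  fin_cases i <;> fin_cases j <;> simp
  field_simp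
  ring

lemma exists_isConj_upperTriangular [IsAlgClosed K] (h : SL(2, K)) :
    ∃ (u : Kˣ) (x : K), IsConj h (upperTriangular u x) := by
  obtain ⟨a, b, c, d, hM⟩ : ∃ a b c d : K, (h : Matrix (Fin 2) (Fin 2) K) = !![a, b; c, d] :=
    ⟨_, _, _, _, eta_fin_two _⟩
  have hdet : a * d - b * c = 1 := by rw [← det_fin_two_of, ← hM, det_coe]
  by_cases hc : c = 0
  · subst hc
    have ha : a ≠ 0 := by rintro rfl; simp at hdet
    have hd : d = a⁻¹ := eq_inv_of_mul_eq_one_right (by simpa using hdet)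
    refine ⟨Units.mk0 a ha, b, SemiconjBy.isConj (c := 1) ?_⟩
    ext i j : 2
    fin_cases i <;> fin_cases j <;> simp [hM, hd]
  · obtain ⟨l, hl⟩ : ∃ l : K, l ^ 2 - (a + d) * l + 1 = 0 := by
      obtain ⟨l, hl⟩ := IsAlgClosed.exists_root (C 1 * X ^ 2 + C (-(a + d)) * X + C 1 : K[X])
        (by rw [degree_quadratic one_ne_zero]; decide)
      simp only [IsRoot.def, eval_add, eval_mul, eval_C, eval_pow, eval_X] at hl
      exact ⟨l, by linear_combination hl⟩
    have hl0 : l ≠ 0 := by rintro rfl; simp at hl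
    -- the first column of `P` is an eigenvector of `h` for the eigenvalue `l`
    obtain ⟨P, hP⟩ : ∃ P : SL(2, K), (P : Matrix (Fin 2) (Fin 2) K) = !![(l - d) / c, -1; 1, 0] :=
      ⟨⟨_, by simp [det_fin_two_of]⟩, rfl⟩
    refine ⟨Units.mk0 l hl0, -c, (SemiconjBy.isConj (c := P) ?_).symm⟩
    ext i j : 2
    fin_cases i <;> fin_cases j <;> simp [hM, hP] <;> field_simp
    · linear_combination hl + hdet
    · linear_combination -hl
    · ring

lemma exists_isConj_diagonalHom_of_pow_eq_one [IsAlgClosed K] [CharZero K] {h : SL(2, K)} {k : ℕ}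
    (hk : k ≠ 0) (hpow : h ^ k = 1) : ∃ u : Kˣ, IsConj h (diagonalHom u) := by
  obtain ⟨u, x, hconj⟩ := exists_isConj_upperTriangular h
  refine ⟨u, hconj.trans ?_⟩
  by_cases hu : u⁻¹ = u
  · have hx : x = 0 := eq_zero_of_upperTriangular_pow_eq_one hu hk <| by
      simpa [hpow] using (hconj.pow k).symm
    rw [hx, ← diagonalHom_apply]
  · exact isConj_upperTriangular_diagonalHom_of_inv_ne hu x

end Matrix.SpecialLinearGroup

/-- Every cyclic subgroup `H` of `SL₂(ℂ)` of order `k ≥ 1` is conjugate to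
`A_k = ⟨ω⟩`, where `ω = diag(ζ, ζ⁻¹)` and `ζ` is a primitive `k`-th root of unity: there is
`g ∈ SL₂(ℂ)` with `g·H·g⁻¹ = A_k`. -/
theorem statement15 (k : ℕ) (hk : 1 ≤ k) (ζ : ℂ) (hζ : IsPrimitiveRoot ζ k)
    (ω : Matrix.SpecialLinearGroup (Fin 2) ℂ)
    (hω : (↑ω : Matrix (Fin 2) (Fin 2) ℂ) = !![ζ, 0; 0, ζ⁻¹])
    (H : Subgroup (Matrix.SpecialLinearGroup (Fin 2) ℂ))
    (hcyc : IsCyclic H) (hcard : Nat.card H = k) :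
    ∃ g : Matrix.SpecialLinearGroup (Fin 2) ℂ,
      Subgroup.map (MulAut.conj g).toMonoidHom H = Subgroup.zpowers ω := by
  have : NeZero k := ⟨by omega⟩
  obtain ⟨h, rfl⟩ := (Subgroup.isCyclic_iff_exists_zpowers_eq_top H).mp hcyc
  rw [Nat.card_zpowers] at hcard
  obtain ⟨u, hconj⟩ := SpecialLinearGroup.exists_isConj_diagonalHom_of_pow_eq_one (NeZero.ne k)
    (hcard ▸ pow_orderOf_eq_one h)
  have hu : IsPrimitiveRoot u k := by
    obtain ⟨c, hc⟩ := hconj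
    rw [← hcard, hc.orderOf_eq, orderOf_injective _ SpecialLinearGroup.diagonalHom_injective]
    exact .orderOf u
  have hζu := hζ.isUnit_unit (NeZero.ne k)
  have hωu : ω = SpecialLinearGroup.diagonalHom (hζ.isUnit (NeZero.ne k)).unit := by
    ext i j : 2
    fin_cases i <;> fin_cases j <;> simp [hω]
  obtain ⟨g, hg⟩ := isConj_iff.mp hconj
  refine ⟨g, ?_⟩
  rw [MonoidHom.map_zpowers, MulEquiv.coe_toMonoidHom, MulAut.conj_apply, hg, hωu,
    ← MonoidHom.map_zpowers, ← MonoidHom.map_zpowers, hu.zpowers_eq, hζu.zpowers_eq]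
end
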